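/- arXiv:1606.03320 — 2 statements merged into one kernel-verified Lean document; each statement's English description precedes it below -/
import Mathlib

section
/- Let G be a group and H' ⊆ H ⊆ G subgroups of finite index. Suppose e : G/H' → H' is a function such that e(ρ) depends only on the image of ρ in G/H (i.e. e(ρ) = e(ρ') whenever ρH = ρ'H). Let α ∈ G # H, inducing a permutation of G/H'. Then for any subset Φ ⊆ G/H' mapping bijectively to G/H under the natural projection, the set αΦ = {αφ : φ ∈ Φ} also maps bijectively to G/H, and consequently in any abelian group A and any homomorphism f : H' → A one has ∏_{φ∈Φ} f(e(αφ))^{-1} f(e(φ)) = 1. -/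
/-! The projection `G ⧸ H' → G ⧸ H` intertwines the permutations induced by `α`, so `αΦ` is
again a set of representatives for `G ⧸ H`. Since `e` factors through `G ⧸ H`, both
`∏_{φ ∈ Φ} f(e(αφ))` and `∏_{φ ∈ Φ} f(e(φ))` equal the product of `f ∘ e` over `G ⧸ H`. -/

section Plectic

variable {G : Type*} [Group G]

/-- The plectic group `G # H`: bijections of `G` commuting with right translation by `H`. -/
def plectic (G : Type*) [Group G] (H : Subgroup G) : Subgroup (Equiv.Perm G) where
  carrier := {α : Equiv.Perm G | ∀ (g : G), ∀ h ∈ H, α (g * h) = α g * h}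
  one_mem' := fun _ _ _ => rfl
  mul_mem' := by
    intro a b ha hb g h hh
    simp only [Equiv.Perm.mul_apply, hb g h hh, ha (b g) h hh]
  inv_mem' := by
    intro a ha g h hh
    apply a.injective
    rw [ha (a⁻¹ g) h hh, Equiv.Perm.coe_inv, Equiv.apply_symm_apply, Equiv.apply_symm_apply]

theorem mem_plectic {H : Subgroup G} {α : Equiv.Perm G} :
    α ∈ plectic G H ↔ ∀ (g : G), ∀ h ∈ H, α (g * h) = α g * h := Iff.rfl

theorem plectic_apply {H : Subgroup G} (α : plectic G H) (g : G) {h : G} (hh : h ∈ H) :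
    (α : Equiv.Perm G) (g * h) = (α : Equiv.Perm G) g * h := α.2 g h hh

/-- The permutation of left cosets `G ⧸ H` induced by an element of the plectic group. -/
def inducedPerm {H : Subgroup G} (α : plectic G H) : Equiv.Perm (G ⧸ H) where
  toFun := Quotient.map' (⇑(α : Equiv.Perm G)) (by
    intro a b hab
    rw [QuotientGroup.leftRel_apply] at hab ⊢
    have h1 := plectic_apply α a hab
    rw [mul_inv_cancel_left] at h1
    rw [h1, inv_mul_cancel_left]
    exact hab)
  invFun := Quotient.map' (⇑((α⁻¹ : plectic G H) : Equiv.Perm G)) (by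
    intro a b hab
    rw [QuotientGroup.leftRel_apply] at hab ⊢
    have h1 := plectic_apply α⁻¹ a hab
    rw [mul_inv_cancel_left] at h1
    rw [h1, inv_mul_cancel_left]
    exact hab)
  left_inv := by
    intro q
    induction q using Quotient.inductionOn' with
    | h g => simp [Quotient.map'_mk'']
  right_inv := by
    intro q
    induction q using Quotient.inductionOn' with
    | h g => simp [Quotient.map'_mk'']

theorem inducedPerm_mk {H : Subgroup G} (α : plectic G H) (g : G) :
    inducedPerm α (QuotientGroup.mk g) = QuotientGroup.mk ((α : Equiv.Perm G) g) := rfl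

/-- `h_x(α) = s_{π(α)(x)}⁻¹ · α(s_x)`. -/
def hcomp {H : Subgroup G} (α : plectic G H) (s : G ⧸ H → G) (x : G ⧸ H) : G :=
  (s (inducedPerm α x))⁻¹ * (α : Equiv.Perm G) (s x)

theorem hcomp_mem {H : Subgroup G} (α : plectic G H) {s : G ⧸ H → G}
    (hs : ∀ x, QuotientGroup.mk (s x) = x) (x : G ⧸ H) : hcomp α s x ∈ H := by
  simp only [hcomp]
  rw [← QuotientGroup.eq, hs, ← inducedPerm_mk α (s x), hs]

/-- The map `ρ_s` to (the underlying set of) the wreath product. -/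
def rhoPair {H : Subgroup G} (s : G ⧸ H → G) (hs : ∀ x, QuotientGroup.mk (s x) = x)
    (α : plectic G H) : Equiv.Perm (G ⧸ H) × ((G ⧸ H) → H) :=
  (inducedPerm α, fun x => ⟨hcomp α s x, hcomp_mem α hs x⟩)

end Plectic

/-- The natural projection `G ⧸ H' → G ⧸ H` for `H' ≤ H`. -/
def cosetProj {G : Type*} [Group G] (H H' : Subgroup G) (hle : H' ≤ H) :
    G ⧸ H' → G ⧸ H :=
  Quotient.map' id (by
    intro a b hab
    rw [QuotientGroup.leftRel_apply] at hab ⊢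
    exact hle hab)

theorem cosetProj_inducedPerm {G : Type*} [Group G] {H H' : Subgroup G} (hle : H' ≤ H)
    {α : plectic G H} {β : plectic G H'} (hβ : (β : Equiv.Perm G) = (α : Equiv.Perm G)) :
    Function.Semiconj (cosetProj H H' hle) (inducedPerm β) (inducedPerm α) := by
  intro ρ
  induction ρ using QuotientGroup.induction_on with
  | H g => exact congrArg (QuotientGroup.mk (s := H)) (congrFun (congrArg DFunLike.coe hβ) g)

theorem finprod_mem_inv_mul_eq_one_of_bijOn {α β M : Type*} [CommGroup M] [Finite β]
    {p q : α → β} {s : Set α} (hp : Set.BijOn p s Set.univ) (hq : Set.BijOn q s Set.univ)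
    (g : β → M) : ∏ᶠ a ∈ s, (g (q a))⁻¹ * g (p a) = 1 := by
  have hs : s.Finite := (Set.toFinite _).of_finite_image hp.injOn
  rw [finprod_mem_mul_distrib hs, finprod_mem_inv_distrib _ hs,
    finprod_mem_eq_of_bijOn (g := g) p hp fun _ _ => rfl,
    finprod_mem_eq_of_bijOn (g := g) q hq fun _ _ => rfl, inv_mul_cancel]

theorem plectic_halfTransfer_independence_general (G : Type*) [Group G] (H H' : Subgroup G)
    (hle : H' ≤ H) [H.FiniteIndex]
    (e : G ⧸ H' → H')
    (hee : ∀ ρ ρ' : G ⧸ H', cosetProj H H' hle ρ = cosetProj H H' hle ρ' → e ρ = e ρ')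
    (α : plectic G H) (β : plectic G H') (hβ : (β : Equiv.Perm G) = (α : Equiv.Perm G))
    (Φ : Set (G ⧸ H')) (hΦ : Set.BijOn (cosetProj H H' hle) Φ Set.univ) :
    Set.BijOn (cosetProj H H' hle) ((inducedPerm β) '' Φ) Set.univ ∧
    ∀ (A : Type*) [CommGroup A] (f : H' →* A),
      (∏ᶠ φ ∈ Φ, ((f (e (inducedPerm β φ)))⁻¹ * f (e φ))) = 1 := by
  have hshift : Set.BijOn (cosetProj H H' hle ∘ inducedPerm β) Φ Set.univ := by
    rw [(cosetProj_inducedPerm hle hβ).comp_eq]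
    exact (inducedPerm α).bijective.bijOn_univ.comp hΦ
  refine ⟨(Set.bijOn_comp_iff (inducedPerm β).injective.injOn).1 hshift, fun A _ f => ?_⟩
  have hfactor : Function.FactorsThrough e (cosetProj H H' hle) := hee
  simpa only [Function.comp_apply, hfactor.extend_apply] using
    finprod_mem_inv_mul_eq_one_of_bijOn hΦ hshift (f ∘ Function.extend (cosetProj H H' hle) e 1)

/-- If `e : G/H' → H'` depends only on the image in `G/H` and `α ∈ G # H`, then for any
`Φ ⊆ G/H'` mapping bijectively onto `G/H`, so does `αΦ`, and consequently for any
homomorphism `f` from `H'` to an abelian group, `∏_{φ∈Φ} f(e(αφ))⁻¹ f(e(φ)) = 1`. -/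
theorem plectic_halfTransfer_independence (G : Type*) [Group G] (H H' : Subgroup G)
    (hle : H' ≤ H) [H.FiniteIndex] [H'.FiniteIndex]
    (e : G ⧸ H' → H')
    (hee : ∀ ρ ρ' : G ⧸ H', cosetProj H H' hle ρ = cosetProj H H' hle ρ' → e ρ = e ρ')
    (α : plectic G H) (β : plectic G H') (hβ : (β : Equiv.Perm G) = (α : Equiv.Perm G))
    (Φ : Set (G ⧸ H')) (hΦ : Set.BijOn (cosetProj H H' hle) Φ Set.univ) :
    Set.BijOn (cosetProj H H' hle) ((inducedPerm β) '' Φ) Set.univ ∧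
    ∀ (A : Type*) [CommGroup A] (f : H' →* A),
      (∏ᶠ φ ∈ Φ, ((f (e (inducedPerm β φ)))⁻¹ * f (e φ))) = 1 :=
  plectic_halfTransfer_independence_general G H H' hle e hee α β hβ Φ hΦ
end

section
/- Let F ⊆ k be number fields with k/ℚ Galois, and set G = Gal(k/ℚ), H = Gal(k/F), X = G/H. Then a choice of coset representatives s = (s_x) for H in G determines an isomorphism of F-algebras F ⊗_ℚ k ≅ ∏_{x∈X} k (sending a⊗b to (s_x(a)·b)_x after identifying X with embeddings F → k), and the induced composite isomorphism Aut_F(F ⊗_ℚ k) ≅ Sym(X) ⋉ H^X ≅ G # H is independent of the choice of s. -/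
section PlecticTwist

variable {G : Type*} [Group G] {H : Subgroup G}

theorem inducedPerm_mul (α β : plectic G H) :
    inducedPerm (α * β) = inducedPerm α * inducedPerm β := by
  ext x
  induction x using QuotientGroup.induction_on
  rfl

/-- Unlike `hcomp`, this needs no coset representatives: `α (g * h) * (g * h)⁻¹ = α g * g⁻¹`
for `h ∈ H`. -/
def plecticTwist (α : plectic G H) (x : G ⧸ H) : G :=
  Quotient.liftOn' x (fun g => (α : Equiv.Perm G) g * g⁻¹) fun g g' hgg' => by
    rw [QuotientGroup.leftRel_apply] at hgg'
    rw [← mul_inv_cancel_left g g', plectic_apply α g hgg']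
    group

@[simp]
theorem plecticTwist_mk (α : plectic G H) (g : G) :
    plecticTwist α (g : G ⧸ H) = (α : Equiv.Perm G) g * g⁻¹ := rfl

theorem plecticTwist_mk_mul (α : plectic G H) (g : G) :
    plecticTwist α (g : G ⧸ H) * g = (α : Equiv.Perm G) g := by
  simp

theorem plecticTwist_smul (α : plectic G H) (x : G ⧸ H) :
    plecticTwist α x • x = inducedPerm α x := by
  induction x using QuotientGroup.induction_on with
  | H g => rw [MulAction.Quotient.smul_mk, smul_eq_mul, plecticTwist_mk_mul]; rfl

theorem plecticTwist_mul (α β : plectic G H) (x : G ⧸ H) :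
    plecticTwist (α * β) x = plecticTwist α (inducedPerm β x) * plecticTwist β x := by
  induction x using QuotientGroup.induction_on with
  | H g => simp [inducedPerm_mk, mul_assoc]

def plecticMk (π : Equiv.Perm (G ⧸ H)) (τ : G ⧸ H → G) (hτ : ∀ x, τ x • x = π x) :
    plectic G H :=
  ⟨{ toFun := fun g => τ g * g
     invFun := fun g => (τ (π.symm g))⁻¹ * g
     left_inv := fun g => by
       have hg : ((τ g * g : G) : G ⧸ H) = π g := hτ g
       simp [hg]
     right_inv := fun g => by
       have hg : (((τ (π.symm g))⁻¹ * g : G) : G ⧸ H) = π.symm g := by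
         rw [← smul_eq_mul, ← MulAction.Quotient.smul_mk, inv_smul_eq_iff, hτ,
           Equiv.apply_symm_apply]
       simp [hg] },
    fun g h hh => by simp [QuotientGroup.mk_mul_of_mem g hh, mul_assoc]⟩

@[simp]
theorem plecticMk_apply (π : Equiv.Perm (G ⧸ H)) (τ : G ⧸ H → G) (hτ : ∀ x, τ x • x = π x)
    (g : G) : (plecticMk π τ hτ : Equiv.Perm G) g = τ g * g := rfl

theorem inducedPerm_plecticMk (π : Equiv.Perm (G ⧸ H)) (τ : G ⧸ H → G)
    (hτ : ∀ x, τ x • x = π x) : inducedPerm (plecticMk π τ hτ) = π := by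
  ext x
  induction x using QuotientGroup.induction_on with
  | H g => exact hτ g

theorem plecticTwist_plecticMk (π : Equiv.Perm (G ⧸ H)) (τ : G ⧸ H → G)
    (hτ : ∀ x, τ x • x = π x) : plecticTwist (plecticMk π τ hτ) = τ := by
  ext x
  induction x using QuotientGroup.induction_on with
  | H g => simp

end PlecticTwist

/-- The kernel of `p` is prime, hence contains the kernel of some projection. -/
theorem Pi.exists_eq_comp_evalAlgHom {R A B ι : Type*} [CommSemiring R] [CommRing A] [CommRing B]
    [IsDomain B] [Algebra R A] [Algebra R B] [Finite ι] (p : (ι → A) →ₐ[R] B) :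
    ∃ (i : ι) (σ : A →ₐ[R] B), p = σ.comp (Pi.evalAlgHom R (fun _ => A) i) := by
  obtain ⟨i, q, hq⟩ :=
    PrimeSpectrum.exists_comap_evalRingHom_eq ⟨RingHom.ker p, RingHom.ker_isPrime p⟩
  refine ⟨i, p.comp (Pi.constAlgHom R ι A), AlgHom.ext fun v => ?_⟩
  have hker : v - Function.const ι (v i) ∈ RingHom.ker p := by
    rw [show RingHom.ker p = _ from congrArg PrimeSpectrum.asIdeal hq.symm]
    simp [Ideal.mem_comap, q.asIdeal.zero_mem]
  rw [RingHom.mem_ker, map_sub, sub_eq_zero] at hker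
  exact hker

section Monomial

variable {R k ι : Type*} [CommSemiring R]

def monomialAlgEquiv [Semiring k] [Algebra R k] (π : Equiv.Perm ι) (τ : ι → k ≃ₐ[R] k) :
    (ι → k) ≃ₐ[R] (ι → k) :=
  (AlgEquiv.piCongrRight τ).trans (AlgEquiv.piCongrLeft' R (fun _ => k) π)

@[simp]
theorem monomialAlgEquiv_apply_apply [Semiring k] [Algebra R k] (π : Equiv.Perm ι)
    (τ : ι → k ≃ₐ[R] k) (v : ι → k) (x : ι) : monomialAlgEquiv π τ v (π x) = τ x (v x) := by
  simp [monomialAlgEquiv, AlgEquiv.piCongrLeft'_apply]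

theorem monomialAlgEquiv_mul [Semiring k] [Algebra R k] (π π' : Equiv.Perm ι)
    (τ τ' : ι → k ≃ₐ[R] k) :
    monomialAlgEquiv π τ * monomialAlgEquiv π' τ' =
      monomialAlgEquiv (π * π') (fun x => τ (π' x) * τ' x) := by
  ext v z
  obtain ⟨x, rfl⟩ := (π * π').surjective z
  rw [monomialAlgEquiv_apply_apply, AlgEquiv.mul_apply, Equiv.Perm.mul_apply,
    monomialAlgEquiv_apply_apply, monomialAlgEquiv_apply_apply]
  rfl

theorem AlgEquiv.exists_eq_monomialAlgEquiv [Field k] [Algebra R k] [Finite ι]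
    (Φ : (ι → k) ≃ₐ[R] (ι → k)) :
    ∃ (π : Equiv.Perm ι) (τ : ι → k ≃ₐ[R] k), Φ = monomialAlgEquiv π τ := by
  classical
  choose y σ hyσ using fun z =>
    Pi.exists_eq_comp_evalAlgHom ((Pi.evalAlgHom R (fun _ => k) z).comp Φ.toAlgHom)
  have hΦ : ∀ v z, Φ v z = σ z (v (y z)) := fun v z => AlgHom.congr_fun (hyσ z) v
  have hy : Function.Surjective y := by
    intro i
    by_contra! hi
    have h : Φ (Pi.single i 1) = Φ 0 := funext fun z => by
      rw [hΦ, hΦ, Pi.single_eq_of_ne (hi z), Pi.zero_apply]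
    simpa using congrFun (Φ.injective h) i
  have hσ : ∀ z, Function.Bijective (σ z) := fun z =>
    ⟨(σ z).toRingHom.injective, fun c => ⟨Φ.symm (Function.const ι c) (y z), by
      rw [← hΦ, Φ.apply_symm_apply, Function.const_apply]⟩⟩
  let e := Equiv.ofBijective y ⟨Finite.injective_iff_surjective.mpr hy, hy⟩
  refine ⟨e.symm, fun x => AlgEquiv.ofBijective (σ (e.symm x)) (hσ _), ?_⟩
  ext v z
  obtain ⟨x, rfl⟩ := e.symm.surjective z
  rw [monomialAlgEquiv_apply_apply, hΦ, AlgEquiv.ofBijective_apply]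
  exact congrArg (σ _ ∘ v) (e.apply_symm_apply x)

end Monomial

section PlecticMonomial

variable {R k : Type*} [CommSemiring R] [Semiring k] [Algebra R k] {H : Subgroup (k ≃ₐ[R] k)}

def plecticToMonomial :
    plectic (k ≃ₐ[R] k) H →* ((k ≃ₐ[R] k) ⧸ H → k) ≃ₐ[R] ((k ≃ₐ[R] k) ⧸ H → k) :=
  MonoidHom.mk' (fun α => monomialAlgEquiv (inducedPerm α) (plecticTwist α)) fun α β => by
    rw [monomialAlgEquiv_mul, inducedPerm_mul]
    exact congrArg _ (funext (plecticTwist_mul α β))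

@[simp]
theorem plecticToMonomial_apply_apply (α : plectic (k ≃ₐ[R] k) H) (v : (k ≃ₐ[R] k) ⧸ H → k)
    (x : (k ≃ₐ[R] k) ⧸ H) : plecticToMonomial α v (inducedPerm α x) = plecticTwist α x (v x) :=
  monomialAlgEquiv_apply_apply _ _ _ _

theorem plecticToMonomial_plecticMk (π : Equiv.Perm ((k ≃ₐ[R] k) ⧸ H))
    (τ : (k ≃ₐ[R] k) ⧸ H → k ≃ₐ[R] k) (hτ : ∀ x, τ x • x = π x) :
    plecticToMonomial (plecticMk π τ hτ) = monomialAlgEquiv π τ := by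
  simp only [plecticToMonomial, MonoidHom.mk'_apply, inducedPerm_plecticMk,
    plecticTwist_plecticMk]

theorem plecticToMonomial_injective :
    Function.Injective (plecticToMonomial : plectic (k ≃ₐ[R] k) H →* _) := by
  rw [injective_iff_map_eq_one]
  intro α hα
  have hτ : ∀ x, plecticTwist α x = 1 := fun x => AlgEquiv.ext fun c => by
    simpa using congrFun (AlgEquiv.congr_fun hα (Function.const _ c)) (inducedPerm α x)
  refine Subtype.ext (Equiv.ext fun g => ?_)
  rw [← plecticTwist_mk_mul, hτ, one_mul]
  rfl

end PlecticMonomial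

open scoped TensorProduct

section TensorPi

variable {K L E ι : Type*} [Field K] [Ring L] [Field E] [Algebra K L] [Algebra K E]

def tensorPiAlgHom (σ : ι → L →ₐ[K] E) : E ⊗[K] L →ₐ[E] (ι → E) :=
  AlgHom.pi fun i =>
    Algebra.TensorProduct.lift (AlgHom.id E E) (σ i) fun _ _ => Commute.all _ _

@[simp]
theorem tensorPiAlgHom_tmul (σ : ι → L →ₐ[K] E) (b : E) (a : L) (i : ι) :
    tensorPiAlgHom σ (b ⊗ₜ a) i = b * σ i a := by
  simp [tensorPiAlgHom]

/-- A linear form on `ι → E` vanishing on the range would be a relation `∑ c i • σ i = 0`,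
which Dedekind's independence of characters rules out. -/
theorem tensorPiAlgHom_surjective [Finite ι] {σ : ι → L →ₐ[K] E} (hσ : Function.Injective σ) :
    Function.Surjective (tensorPiAlgHom σ) := by
  classical
  have := Fintype.ofFinite ι
  by_contra hsurj
  obtain ⟨f, hf0, hf⟩ := Submodule.exists_le_ker_of_lt_top
    (LinearMap.range (tensorPiAlgHom σ).toLinearMap)
    (lt_top_iff_ne_top.mpr fun h => hsurj (LinearMap.range_eq_top.mp h))
  let c : ι → E := fun i => f fun j => if i = j then 1 else 0
  have hc : ∑ i, c i • ((σ i).toRingHom.toMonoidHom : L → E) = 0 := funext fun a => by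
    have h : f (tensorPiAlgHom σ (1 ⊗ₜ a)) = 0 := hf ⟨1 ⊗ₜ a, rfl⟩
    rw [LinearMap.pi_apply_eq_sum_univ] at h
    simpa [mul_comm, c] using h
  have hσ' : Function.Injective fun i => (σ i).toRingHom.toMonoidHom := fun i j hij =>
    hσ (AlgHom.ext fun a => DFunLike.congr_fun hij a)
  have hc0 : ∀ i, c i = 0 :=
    Fintype.linearIndependent_iff.mp ((linearIndependent_monoidHom L E).comp _ hσ') c hc
  exact hf0 (LinearMap.ext fun v => by simp [LinearMap.pi_apply_eq_sum_univ f v, hc0, c])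

theorem tensorPiAlgHom_bijective [Finite ι] [FiniteDimensional K L] {σ : ι → L →ₐ[K] E}
    (hσ : Function.Injective σ) (hcard : Nat.card ι = Module.finrank K L) :
    Function.Bijective (tensorPiAlgHom σ) := by
  have := Fintype.ofFinite ι
  have hdim : Module.finrank E (E ⊗[K] L) = Module.finrank E (ι → E) := by
    rw [Module.finrank_baseChange, Module.finrank_fintype_fun_eq_card, ← hcard,
      Nat.card_eq_fintype_card]
  have hsurj := tensorPiAlgHom_surjective hσ
  exact ⟨(LinearMap.injective_iff_surjective_of_finrank_eq_finrank hdim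
    (f := (tensorPiAlgHom σ).toLinearMap)).mpr hsurj, hsurj⟩

noncomputable def tensorPiAlgEquiv [Finite ι] [FiniteDimensional K L] (σ : ι → L →ₐ[K] E)
    (hσ : Function.Injective σ) (hcard : Nat.card ι = Module.finrank K L) :
    L ⊗[K] E ≃ₐ[K] (ι → E) :=
  (Algebra.TensorProduct.comm K L E).trans
    ((AlgEquiv.ofBijective _ (tensorPiAlgHom_bijective hσ hcard)).restrictScalars K)

@[simp]
theorem tensorPiAlgEquiv_tmul [Finite ι] [FiniteDimensional K L] (σ : ι → L →ₐ[K] E)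
    (hσ : Function.Injective σ) (hcard : Nat.card ι = Module.finrank K L) (a : L) (b : E)
    (i : ι) : tensorPiAlgEquiv σ hσ hcard (a ⊗ₜ b) i = σ i a * b := by
  simp [tensorPiAlgEquiv, mul_comm]

end TensorPi

section Galois

variable {K E : Type*} [Field K] [Field E] [Algebra K E] (F : IntermediateField K E)

theorem mk_eq_mk_fixingSubgroup_iff {g g' : E ≃ₐ[K] E} :
    (g : (E ≃ₐ[K] E) ⧸ F.fixingSubgroup) = g' ↔ ∀ a : F, g a = g' a := by
  rw [QuotientGroup.eq, IntermediateField.mem_fixingSubgroup_iff]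
  refine ⟨fun h a => ?_, fun h a ha => ?_⟩
  · simpa using (congrArg g (h a a.2)).symm
  · rw [AlgEquiv.mul_apply, ← h ⟨a, ha⟩]
    simp

def cosetEmb (x : (E ≃ₐ[K] E) ⧸ F.fixingSubgroup) : F →ₐ[K] E :=
  Quotient.liftOn' x (fun g => (g : E →ₐ[K] E).comp F.val) fun _ _ h =>
    AlgHom.ext ((mk_eq_mk_fixingSubgroup_iff F).mp (Quotient.sound' h))

@[simp]
theorem cosetEmb_mk (g : E ≃ₐ[K] E) (a : F) : cosetEmb F g a = g a := rfl

theorem cosetEmb_injective : Function.Injective (cosetEmb F) := by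
  intro x y hxy
  induction x using QuotientGroup.induction_on
  induction y using QuotientGroup.induction_on
  exact (mk_eq_mk_fixingSubgroup_iff F).mpr (AlgHom.congr_fun hxy)

theorem smul_eq_iff_cosetEmb (σ : E ≃ₐ[K] E) (x y : (E ≃ₐ[K] E) ⧸ F.fixingSubgroup) :
    σ • x = y ↔ ∀ a : F, σ (cosetEmb F x a) = cosetEmb F y a := by
  induction x using QuotientGroup.induction_on
  induction y using QuotientGroup.induction_on
  exact mk_eq_mk_fixingSubgroup_iff F

theorem plecticTwist_cosetEmb (α : plectic (E ≃ₐ[K] E) F.fixingSubgroup)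
    (x : (E ≃ₐ[K] E) ⧸ F.fixingSubgroup) (a : F) :
    plecticTwist α x (cosetEmb F x a) = cosetEmb F (inducedPerm α x) a :=
  (smul_eq_iff_cosetEmb F _ _ _).mp (plecticTwist_smul α x) a

variable [FiniteDimensional K E] [IsGalois K E]

noncomputable def tensorEquivPiCosets :
    F ⊗[K] E ≃ₐ[K] ((E ≃ₐ[K] E) ⧸ F.fixingSubgroup → E) :=
  tensorPiAlgEquiv (cosetEmb F) (cosetEmb_injective F)
    (IntermediateField.finrank_eq_fixingSubgroup_index E F).symm

@[simp]
theorem tensorEquivPiCosets_tmul (a : F) (b : E) (x : (E ≃ₐ[K] E) ⧸ F.fixingSubgroup) :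
    tensorEquivPiCosets F (a ⊗ₜ b) x = cosetEmb F x a * b :=
  tensorPiAlgEquiv_tmul _ _ _ a b x

end Galois

section TensorAut

variable {K E : Type*} [Field K] [Field E] [Algebra K E] [FiniteDimensional K E] [IsGalois K E]
  (F : IntermediateField K E)

theorem plecticToMonomial_tensorEquivPiCosets_tmul_one
    (α : plectic (E ≃ₐ[K] E) F.fixingSubgroup) (a : F) :
    plecticToMonomial α (tensorEquivPiCosets F (a ⊗ₜ 1)) = tensorEquivPiCosets F (a ⊗ₜ 1) := by
  ext z
  obtain ⟨x, rfl⟩ := (inducedPerm α).surjective z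
  simp [plecticTwist_cosetEmb]

noncomputable def plecticToTensorAut :
    plectic (E ≃ₐ[K] E) F.fixingSubgroup →* (F ⊗[K] E) ≃ₐ[F] (F ⊗[K] E) :=
  MonoidHom.mk'
    (fun α => AlgEquiv.ofRingEquiv (f := ((tensorEquivPiCosets F).trans
      ((plecticToMonomial α).trans (tensorEquivPiCosets F).symm)).toRingEquiv) fun a => by
        simp [Algebra.TensorProduct.algebraMap_apply,
          plecticToMonomial_tensorEquivPiCosets_tmul_one])
    fun α β => AlgEquiv.ext fun v => by
      change (tensorEquivPiCosets F).symm (plecticToMonomial (α * β) (tensorEquivPiCosets F v)) =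
        (tensorEquivPiCosets F).symm (plecticToMonomial α (tensorEquivPiCosets F
        ((tensorEquivPiCosets F).symm (plecticToMonomial β (tensorEquivPiCosets F v)))))
      rw [AlgEquiv.apply_symm_apply, map_mul, AlgEquiv.mul_apply]

theorem tensorEquivPiCosets_plecticToTensorAut (α : plectic (E ≃ₐ[K] E) F.fixingSubgroup)
    (v : F ⊗[K] E) :
    tensorEquivPiCosets F (plecticToTensorAut F α v) =
      plecticToMonomial α (tensorEquivPiCosets F v) :=
  (tensorEquivPiCosets F).apply_symm_apply _

theorem plecticToTensorAut_injective : Function.Injective (plecticToTensorAut F) := by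
  rw [injective_iff_map_eq_one]
  intro α hα
  apply plecticToMonomial_injective
  ext1 w
  obtain ⟨v, rfl⟩ := (tensorEquivPiCosets F).surjective w
  rw [← tensorEquivPiCosets_plecticToTensorAut, hα, map_one]
  rfl

theorem plecticToTensorAut_surjective : Function.Surjective (plecticToTensorAut F) := by
  intro φ
  set e := tensorEquivPiCosets F
  obtain ⟨π, τ, hπτ⟩ :=
    AlgEquiv.exists_eq_monomialAlgEquiv ((e.symm.trans (φ.restrictScalars K)).trans e)
  have hτ : ∀ x, τ x • x = π x := fun x => (smul_eq_iff_cosetEmb F _ _ _).mpr fun a => by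
    have h := congrFun (AlgEquiv.congr_fun hπτ (e (a ⊗ₜ 1))) (π x)
    have hφ : φ (a ⊗ₜ 1) = a ⊗ₜ 1 := φ.commutes a
    simpa [e, hφ] using h.symm
  refine ⟨plecticMk π τ hτ, AlgEquiv.ext fun v => e.injective ?_⟩
  rw [tensorEquivPiCosets_plecticToTensorAut, plecticToMonomial_plecticMk, ← hπτ]
  simp [e]

noncomputable def tensorAutEquivPlectic :
    ((F ⊗[K] E) ≃ₐ[F] (F ⊗[K] E)) ≃* plectic (E ≃ₐ[K] E) F.fixingSubgroup :=
  (MulEquiv.ofBijective (plecticToTensorAut F)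
    ⟨plecticToTensorAut_injective F, plecticToTensorAut_surjective F⟩).symm

theorem tensorEquivPiCosets_apply_inducedPerm (φ : (F ⊗[K] E) ≃ₐ[F] (F ⊗[K] E)) (v : F ⊗[K] E)
    {g : E ≃ₐ[K] E} {x : (E ≃ₐ[K] E) ⧸ F.fixingSubgroup} (hg : (g : _ ⧸ F.fixingSubgroup) = x) :
    tensorEquivPiCosets F (φ v) (inducedPerm (tensorAutEquivPlectic F φ) x) =
      ((tensorAutEquivPlectic F φ : Equiv.Perm (E ≃ₐ[K] E)) g * g⁻¹)
        (tensorEquivPiCosets F v x) := by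
  obtain ⟨α, rfl⟩ := plecticToTensorAut_surjective F φ
  have hα : tensorAutEquivPlectic F (plecticToTensorAut F α) = α :=
    (MulEquiv.ofBijective _ _).symm_apply_apply α
  rw [hα, tensorEquivPiCosets_plecticToTensorAut, plecticToMonomial_apply_apply, ← hg,
    plecticTwist_mk]

end TensorAut

/-- A choice of coset representatives `s` for `Gal(k/F)` in `Gal(k/ℚ)` identifies
`F ⊗_ℚ k` with `∏_{x∈X} k` (via `a⊗b ↦ (s_x(a)·b)_x`), and the induced isomorphism
`Aut_F(F ⊗_ℚ k) ≅ G # H` is independent of the choice of `s`. -/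
theorem tensor_aut_iso_plectic (k : Type*) [Field k] [NumberField k] [IsGalois ℚ k]
    (F : IntermediateField ℚ k) :
    ∃ Θ : ((F ⊗[ℚ] k) ≃ₐ[F] (F ⊗[ℚ] k)) ≃*
        plectic (k ≃ₐ[ℚ] k) F.fixingSubgroup,
      ∀ (s : (k ≃ₐ[ℚ] k) ⧸ F.fixingSubgroup → (k ≃ₐ[ℚ] k)),
        (∀ x, QuotientGroup.mk (s x) = x) →
        ∃ e : (F ⊗[ℚ] k) ≃ₐ[ℚ] (((k ≃ₐ[ℚ] k) ⧸ F.fixingSubgroup) → k),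
          (∀ (a : F) (b : k) (x : (k ≃ₐ[ℚ] k) ⧸ F.fixingSubgroup),
            e (a ⊗ₜ[ℚ] b) x = s x (a : k) * b) ∧
          ∀ (φ : (F ⊗[ℚ] k) ≃ₐ[F] (F ⊗[ℚ] k)) (v : F ⊗[ℚ] k)
            (x : (k ≃ₐ[ℚ] k) ⧸ F.fixingSubgroup),
            e (φ v) (inducedPerm (Θ φ) x) =
              (((Θ φ : Equiv.Perm (k ≃ₐ[ℚ] k)) (s x)) * (s x)⁻¹) (e v x) := by
  refine ⟨tensorAutEquivPlectic F, fun s hs => ⟨tensorEquivPiCosets F, fun a b x => ?_,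
    fun φ v x => ?_⟩⟩
  · exact (tensorEquivPiCosets_tmul F a b x).trans (by rw [← cosetEmb_mk, hs])
  · exact tensorEquivPiCosets_apply_inducedPerm F φ v (hs x)
end
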